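/- arXiv:math/0510247 — 4 statements merged into one kernel-verified Lean document; each statement's English description precedes it below -/
import Mathlib

section
/- Let R be a commutative Noetherian local ring with maximal ideal I and residue field k = R/I, and let E be the injective hull of k as an R-module. Then every element of E is annihilated by some power of I. -/
/-- Let `R` be a commutative Noetherian local ring with maximal ideal `I` and
residue field `k = R/I`, and let `E` be the injective hull of `k` as an `R`-module
(an injective module containing `k` as an essential submodule).  Then every element of `E`
is annihilated by some power of `I`. -/
theorem injectiveHull_is_I_power_torsion
    (R : Type*) [CommRing R] [IsNoetherianRing R] [IsLocalRing R]
    (E : Type*) [AddCommGroup E] [Module R E]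
    (hInj : Module.Injective R E)
    (f : (R ⧸ IsLocalRing.maximalIdeal R) →ₗ[R] E)
    (hf : Function.Injective f)
    (hess : ∀ N : Submodule R E, N ≠ ⊥ → N ⊓ LinearMap.range f ≠ ⊥) :
    ∀ x : E, ∃ n : ℕ, ∀ r ∈ (IsLocalRing.maximalIdeal R) ^ n, r • x = 0 := by
  intro x
  set I := IsLocalRing.maximalIdeal R with hI
  -- the annihilator of `x`
  set J : Ideal R := LinearMap.ker (LinearMap.toSpanSingleton R E x) with hJdef
  have memJ : ∀ s : R, s ∈ J ↔ s • x = 0 := by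
    intro s
    simp [hJdef, LinearMap.mem_ker, LinearMap.toSpanSingleton_apply]
  -- every element of the range of `f` is killed by every element of `I`
  have hkill : ∀ r ∈ I, ∀ z ∈ LinearMap.range f, r • z = 0 := by
    rintro r hr z ⟨a, rfl⟩
    obtain ⟨a', rfl⟩ := Submodule.Quotient.mk_surjective _ a
    rw [← map_smul, ← Submodule.Quotient.mk_smul]
    have h0 : r • a' ∈ I := by simpa [smul_eq_mul] using I.mul_mem_right a' hr
    have : (Submodule.Quotient.mk (r • a') : R ⧸ (I : Submodule R R)) = 0 :=
      (Submodule.Quotient.mk_eq_zero _).mpr h0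
    rw [this, map_zero]
  -- key step: `I ≤ J.radical`
  have hrad : I ≤ J.radical := by
    intro r hr
    -- ascending chain of annihilators of `r ^ n • x`
    have mono : Monotone fun n : ℕ =>
        (LinearMap.ker (LinearMap.toSpanSingleton R E (r ^ n • x)) : Ideal R) := by
      intro n m hnm s hs
      simp only [LinearMap.mem_ker, LinearMap.toSpanSingleton_apply] at hs ⊢
      have : r ^ m • x = r ^ (m - n) • (r ^ n • x) := by
        rw [← mul_smul, ← pow_add, Nat.sub_add_cancel hnm]
      rw [this, smul_comm, hs, smul_zero]
    let A : ℕ →o Ideal R :=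
      ⟨fun n => LinearMap.ker (LinearMap.toSpanSingleton R E (r ^ n • x)), mono⟩
    obtain ⟨n, hn⟩ := monotone_stabilizes_iff_noetherian.mpr
      (inferInstance : IsNoetherianRing R) A
    refine ⟨n, ?_⟩
    rw [memJ]
    by_contra hy
    have hspan : Submodule.span R {r ^ n • x} ≠ ⊥ := by
      simpa [Submodule.span_singleton_eq_bot] using hy
    obtain ⟨z, hz, hz0⟩ := Submodule.exists_mem_ne_zero_of_ne_bot (hess _ hspan)
    rw [Submodule.mem_inf] at hz
    obtain ⟨hz1, hz2⟩ := hz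
    obtain ⟨s, rfl⟩ := Submodule.mem_span_singleton.mp hz1
    have hr0 : r • s • r ^ n • x = 0 := by
      obtain ⟨a, ha⟩ := hz2
      obtain ⟨a', rfl⟩ := Submodule.Quotient.mk_surjective _ a
      rw [← ha, ← map_smul, ← Submodule.Quotient.mk_smul,
        (Submodule.Quotient.mk_eq_zero _).mpr
          (show r • a' ∈ _ by rw [smul_eq_mul]; exact Ideal.mul_mem_right a' _ hr), map_zero]
    have hs1 : s ∈ A (n + 1) := by
      show s • (r ^ (n + 1) • x) = 0
      rw [pow_succ', mul_smul, smul_comm s r, hr0]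
    rw [← hn (n + 1) (Nat.le_succ n)] at hs1
    exact hz0 hs1
  obtain ⟨n, hpow⟩ :=
    Ideal.exists_pow_le_of_le_radical_of_fg hrad (IsNoetherian.noetherian I)
  exact ⟨n, fun r hrn => (memJ r).mp (hpow hrn)⟩
end

section
/- Let R be a commutative Noetherian local ring with maximal ideal I and residue field k. Then Hom_R(k, E) ≅ k, where E is the injective hull of k as an R-module. -/
/-- Let `R` be a commutative Noetherian local ring with maximal ideal `I` and
residue field `k = R/I`, and let `E` be the injective hull of `k` as an `R`-module.
Then `Hom_R(k, E) ≅ k`. -/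
theorem hom_residueField_injectiveHull
    (R : Type*) [CommRing R] [IsNoetherianRing R] [IsLocalRing R]
    (E : Type*) [AddCommGroup E] [Module R E]
    (hInj : Module.Injective R E)
    (f : (R ⧸ IsLocalRing.maximalIdeal R) →ₗ[R] E)
    (hf : Function.Injective f)
    (hess : ∀ N : Submodule R E, N ≠ ⊥ → N ⊓ LinearMap.range f ≠ ⊥) :
    Nonempty (((R ⧸ IsLocalRing.maximalIdeal R) →ₗ[R] E) ≃ₗ[R]
      (R ⧸ IsLocalRing.maximalIdeal R)) := by
  classical
  set k := R ⧸ IsLocalRing.maximalIdeal R with hk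
  -- every g : k →ₗ[R] E sends 1 into range f
  have hmem : ∀ g : k →ₗ[R] E, g 1 ∈ LinearMap.range f := by
    intro g
    by_cases hg : g = 0
    · subst hg; simp
    · have hrg : LinearMap.range g ≠ ⊥ := by
        simpa [LinearMap.range_eq_bot] using hg
      obtain ⟨x, hx, hx0⟩ := Submodule.ne_bot_iff _ |>.mp (hess _ hrg)
      obtain ⟨hxg, hxf⟩ := hx
      obtain ⟨a, rfl⟩ := hxg
      obtain ⟨b, hb⟩ := hxf
      have ha : a ≠ 0 := by rintro rfl; simp at hx0
      -- a lifts to a unit of the local ring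
      obtain ⟨s, rfl⟩ := Ideal.Quotient.mk_surjective a
      have hs : s ∉ IsLocalRing.maximalIdeal R := by
        intro hsm
        exact ha ((Ideal.Quotient.eq_zero_iff_mem).mpr hsm)
      have hu : IsUnit s := by
        by_contra hns
        exact hs (IsLocalRing.mem_maximalIdeal s |>.mpr hns)
      obtain ⟨u, rfl⟩ := hu
      have h1 : (1 : k) = (↑u⁻¹ : R) • (Ideal.Quotient.mk (IsLocalRing.maximalIdeal R) ↑u) := by
        rw [Algebra.smul_def, Ideal.Quotient.algebraMap_eq, ← map_mul,
          Units.inv_mul, map_one]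
      refine ⟨(↑u⁻¹ : R) • b, ?_⟩
      rw [h1, map_smul, map_smul, hb]
  let e := LinearEquiv.ofInjective f hf
  let Φ : (k →ₗ[R] E) →ₗ[R] k :=
    { toFun := fun g => e.symm ⟨g 1, hmem g⟩
      map_add' := by
        intro g h
        rw [← map_add]
        rfl
      map_smul' := by
        intro r g
        rw [← map_smul]
        rfl }
  have hinj : Function.Injective Φ := by
    intro g h hgh
    have h1 : g 1 = h 1 := by
      have := congrArg e hgh
      simp only [Φ, LinearMap.coe_mk, AddHom.coe_mk, e.apply_symm_apply] at this
      exact congrArg Subtype.val this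
    refine LinearMap.ext fun x => ?_
    obtain ⟨r, rfl⟩ := Ideal.Quotient.mk_surjective x
    have hx : (Ideal.Quotient.mk (IsLocalRing.maximalIdeal R) r : k) = r • 1 := by
      rw [Algebra.smul_def, Ideal.Quotient.algebraMap_eq, mul_one]
    rw [hx, map_smul, map_smul, h1]
  have hsurj : Function.Surjective Φ := by
    intro c
    refine ⟨f.comp (LinearMap.mulRight R c), ?_⟩
    have : Φ (f.comp (LinearMap.mulRight R c)) = e.symm (e c) := by
      simp only [Φ, LinearMap.coe_mk, AddHom.coe_mk]
      congr 1
      ext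
      show f (1 * c) = f c
      rw [one_mul]
    rw [this, e.symm_apply_apply]
  exact ⟨LinearEquiv.ofBijective Φ ⟨hinj, hsurj⟩⟩
end

section
/- Let R be a commutative Noetherian local ring with maximal ideal I and residue field k. Then k is 'cosmall' over R, i.e., R belongs to the thick subcategory of the derived category D(R) generated by k, if and only if R is Artinian. -/
/-!
Having homology of finite length in every degree is stable under isomorphisms, shifts,
retracts and extensions (by the long exact homology sequence of a triangle), and `k` has it;
so if `R` is built from `k`, then `R = H⁰(R)` has finite length, i.e. `R` is Artinian.
Conversely, over a local ring every simple module is `k`, so a composition series of an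
Artinian `R` exhibits `R` as an iterated extension of copies of `k`, and short exact sequences
give distinguished triangles in `D(R)`.
-/

open CategoryTheory Pretriangulated Limits

universe v u

variable {C : Type u} [Category.{v} C] [HasZeroObject C] [Preadditive C]
  [HasShift C ℤ] [∀ n : ℤ, (shiftFunctor C n).Additive] [Pretriangulated C]

/-- `IsThickBuilt S X` : `X` belongs to the thick subcategory generated by `S`
(the smallest class containing `S` closed under isomorphisms, shifts, extensions in
distinguished triangles, and retracts). -/
inductive IsThickBuilt (S : C) : C → Prop
  | base : IsThickBuilt S S
  | of_iso {X Y : C} (_ : X ≅ Y) : IsThickBuilt S X → IsThickBuilt S Y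
  | shift (X : C) (n : ℤ) : IsThickBuilt S X → IsThickBuilt S (X⟦n⟧)
  | ext₂ {T : Triangle C} (_ : T ∈ distTriang C) :
      IsThickBuilt S T.obj₁ → IsThickBuilt S T.obj₃ → IsThickBuilt S T.obj₂
  | retract {X Y : C} (i : Y ⟶ X) (p : X ⟶ Y) (_ : i ≫ p = 𝟙 Y) :
      IsThickBuilt S X → IsThickBuilt S Y

theorem IsFiniteLength.of_range_eq_ker {R : Type*} [Ring R] {M N P : Type*}
    [AddCommGroup M] [Module R M] [AddCommGroup N] [Module R N] [AddCommGroup P] [Module R P]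
    {f : M →ₗ[R] N} {g : N →ₗ[R] P} (hfg : LinearMap.range f = LinearMap.ker g)
    (hM : IsFiniteLength R M) (hP : IsFiniteLength R P) : IsFiniteLength R N := by
  rw [isFiniteLength_iff_isNoetherian_isArtinian] at hM hP ⊢
  obtain ⟨_, _⟩ := hM
  obtain ⟨_, _⟩ := hP
  exact ⟨isNoetherian_of_range_eq_ker f g hfg, isArtinian_of_range_eq_ker f g hfg⟩

theorem IsFiniteLength.of_isSimpleModule {R : Type*} [Ring R] {M : Type*}
    [AddCommGroup M] [Module R M] [IsSimpleModule R M] : IsFiniteLength R M := by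
  have : IsSimpleModule R (M ⧸ (⊥ : Submodule R M)) :=
    IsSimpleModule.congr (Submodule.quotEquivOfEqBot ⊥ rfl)
  exact .of_simple_quotient (N := ⊥) .of_subsingleton

theorem IsLocalRing.nonempty_linearEquiv_residue_of_isSimpleModule (R : Type*) [CommRing R]
    [IsLocalRing R] (M : Type*) [AddCommGroup M] [Module R M] [IsSimpleModule R M] :
    Nonempty (M ≃ₗ[R] R ⧸ IsLocalRing.maximalIdeal R) := by
  obtain ⟨I, hI, e⟩ := isSimpleModule_iff_quot_maximal.mp ‹_›
  rwa [← IsLocalRing.eq_maximalIdeal hI]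

theorem IsThickBuilt.of_isZero {S X : C} (hX : IsZero X) : IsThickBuilt S X :=
  .retract 0 0 (hX.eq_of_src _ _) .base

open DerivedCategory

section Homology

variable {R : Type u} [Ring R] [HasDerivedCategory.{u} (ModuleCat.{u} R)]

theorem isFiniteLength_homology_singleFunctor_obj {M : ModuleCat.{u} R}
    (hM : IsFiniteLength R M) (m n : ℤ) :
    IsFiniteLength R ((homologyFunctor (ModuleCat.{u} R) n).obj
      ((singleFunctor (ModuleCat.{u} R) m).obj M)) := by
  obtain rfl | hn := eq_or_ne n m
  · exact ((singleFunctorCompHomologyFunctorIso _ n).app M).symm.toLinearEquiv.isFiniteLength hM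
  · have := ModuleCat.subsingleton_of_isZero <| (lt_or_gt_of_ne hn).elim
      (fun h => isZero_of_isGE ((singleFunctor _ m).obj M) m n h)
      (fun h => isZero_of_isLE ((singleFunctor _ m).obj M) m n h)
    exact .of_subsingleton

theorem IsThickBuilt.isFiniteLength_homology {S X : DerivedCategory (ModuleCat.{u} R)}
    (h : IsThickBuilt S X)
    (hS : ∀ n : ℤ, IsFiniteLength R ((homologyFunctor (ModuleCat.{u} R) n).obj S)) (n : ℤ) :
    IsFiniteLength R ((homologyFunctor (ModuleCat.{u} R) n).obj X) := by
  induction h generalizing n with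
  | base => exact hS n
  | of_iso e _ ih => exact ((homologyFunctor _ n).mapIso e).toLinearEquiv.isFiniteLength (ih n)
  | shift Y m _ ih =>
    have e := ((homologyFunctor _ 0).shiftIso m n (m + n) rfl).app Y
    exact e.symm.toLinearEquiv.isFiniteLength (ih (m + n))
  | ext₂ hT _ _ ih₁ ih₃ =>
    exact .of_range_eq_ker (HomologySequence.exact₂ _ hT n).moduleCat_range_eq_ker
      (ih₁ n) (ih₃ n)
  | retract i p hip _ ih =>
    have : IsSplitMono i := .mk' ⟨p, hip⟩
    exact (ih n).of_injective
      ((ModuleCat.mono_iff_injective ((homologyFunctor _ n).map i)).mp inferInstance)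

end Homology

theorem isThickBuilt_singleFunctor_residueField_of_isFiniteLength {R : Type u} [CommRing R]
    [IsLocalRing R] [HasDerivedCategory.{u} (ModuleCat.{u} R)] {M : Type u} [AddCommGroup M]
    [Module R M] (hM : IsFiniteLength R M) :
    IsThickBuilt
      ((singleFunctor (ModuleCat.{u} R) 0).obj
        (ModuleCat.of R (R ⧸ IsLocalRing.maximalIdeal R)))
      ((singleFunctor (ModuleCat.{u} R) 0).obj (ModuleCat.of R M)) := by
  induction hM with
  | of_subsingleton =>
    exact .of_isZero ((singleFunctor _ 0).map_isZero (ModuleCat.isZero_of_subsingleton _))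
  | @of_simple_quotient M _ _ N _ _ ih =>
    obtain ⟨e⟩ := IsLocalRing.nonempty_linearEquiv_residue_of_isSimpleModule R (M ⧸ N)
    have hT := (LinearMap.shortExact_shortComplexKer N.mkQ_surjective).singleTriangle_distinguished
    refine .ext₂ hT ?_ (.of_iso ((singleFunctor _ 0).mapIso e.symm.toModuleIso) .base)
    exact .of_iso ((singleFunctor _ 0).mapIso
      (LinearEquiv.ofEq _ _ (Submodule.ker_mkQ N).symm).toModuleIso) ih

theorem cosmall_iff_artinian_general
    (R : Type u) [CommRing R] [IsLocalRing R]
    [HasDerivedCategory.{u} (ModuleCat.{u} R)] :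
    IsThickBuilt
      ((DerivedCategory.singleFunctor (ModuleCat.{u} R) 0).obj
        (ModuleCat.of R (R ⧸ IsLocalRing.maximalIdeal R)))
      ((DerivedCategory.singleFunctor (ModuleCat.{u} R) 0).obj (ModuleCat.of R R))
      ↔ IsArtinianRing R := by
  have : IsSimpleModule R (R ⧸ IsLocalRing.maximalIdeal R) :=
    isSimpleModule_iff_isCoatom.mpr (IsLocalRing.maximalIdeal.isMaximal R).out
  refine ⟨fun h => ?_, fun h => ?_⟩
  · have hR := h.isFiniteLength_homology
      (isFiniteLength_homology_singleFunctor_obj .of_isSimpleModule 0) 0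
    have e := (singleFunctorCompHomologyFunctorIso _ 0).app (ModuleCat.of R R)
    exact (isFiniteLength_iff_isNoetherian_isArtinian.mp (e.toLinearEquiv.isFiniteLength hR)).2
  · -- Hopkins–Levitzki supplies `IsNoetherianRing R`.
    exact isThickBuilt_singleFunctor_residueField_of_isFiniteLength
      (isFiniteLength_iff_isNoetherian_isArtinian.mpr ⟨inferInstance, h⟩)

/-- Let `R` be a commutative Noetherian local ring with maximal ideal `I`
and residue field `k`.  Then `k` is "cosmall" over `R`, i.e. `R` belongs to the thick
subcategory of the derived category `D(R)` generated by `k`, if and only if `R` is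
Artinian. -/
theorem cosmall_iff_artinian
    (R : Type u) [CommRing R] [IsNoetherianRing R] [IsLocalRing R]
    [HasDerivedCategory.{u} (ModuleCat.{u} R)] :
    IsThickBuilt
      ((DerivedCategory.singleFunctor (ModuleCat.{u} R) 0).obj
        (ModuleCat.of R (R ⧸ IsLocalRing.maximalIdeal R)))
      ((DerivedCategory.singleFunctor (ModuleCat.{u} R) 0).obj (ModuleCat.of R R))
      ↔ IsArtinianRing R :=
  cosmall_iff_artinian_general R
end

section
/- Let k be a field and A a finite-dimensional graded connected Hopf algebra over k (A_0 = k). Then A satisfies Poincaré duality: the graded dual Hom_k(A, k) is a free A-module of rank one. -/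
/-!
Since `A` is finite-dimensional and connected, its augmentation ideal `A₊ = ker ε` is nilpotent.
Hence `A` has a nonzero two-sided integral `t`, and the left integrals are exactly the elements
annihilated by `A₊`, i.e. the left socle.

For a functional `g` with `g t = 1`, the element `t ↼ g = ∑ g(t₁) t₂` has counit `1`, so it is
a unit, and twisting `g` by its inverse gives `f` with `t ↼ f = 1`. Sweedler's identities
`Δ(t)(a ⊗ 1) = Δ(t)(1 ⊗ S a)` and `(1 ⊗ a)Δ(t) = (S a ⊗ 1)Δ(t)` turn into
`t ↼ (f ∘ R_r) = S r` and `t ↼ (f ∘ L_{S a}) = a`. So `S` is injective and `r ↦ f ∘ R_r` is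
injective, and since `f ∘ R_x = f(x) ε` for every left integral `x`, the left integrals form
the line `k t`.

Every nonzero left ideal `A r` contains a nonzero element `u r` of the left socle because `A₊` is
nilpotent. Then `u r = c t` with `c ≠ 0`, so any `ω` with `ω t ≠ 0` has `ω (u r) ≠ 0`.
Hence `r ↦ ω(— * r)` is injective, and it is bijective by counting dimensions.
-/

open scoped TensorProduct
open Coalgebra (comul counit Repr sum_tmul_tmul_eq sum_tmul_counit_eq)
open HopfAlgebra (antipode)
open scoped Coalgebra

theorem Coalgebra.sum_counit_right_smul {R A : Type*} [CommSemiring R] [AddCommMonoid A]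
    [Module R A] [Coalgebra R A] {a : A} {ι : Type*} (𝓡 : Repr R a ι) :
    ∑ i ∈ 𝓡.index, counit (R := R) (𝓡.right i) • 𝓡.left i = a := by
  simpa only [map_sum, _root_.TensorProduct.rid_tmul, one_smul] using
    congrArg (_root_.TensorProduct.rid R A) (sum_tmul_counit_eq (R := R) 𝓡)

namespace HopfAlgebra

open TensorProduct

variable {R A : Type*} [CommSemiring R] [Semiring A] [HopfAlgebra R A]

theorem sum_comul_mul_one_tmul_antipode {a : A} {ι : Type*} (𝓡 : Repr R a ι) :
    ∑ i ∈ 𝓡.index, comul (R := R) (𝓡.left i) * (1 ⊗ₜ antipode R (𝓡.right i)) = a ⊗ₜ 1 := by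
  classical
  let 𝓡₁ := fun i => ℛ R (𝓡.left i)
  let 𝓡₂ := fun i => ℛ R (𝓡.right i)
  have hcoassoc := sum_tmul_tmul_eq 𝓡 𝓡₁ 𝓡₂
  apply_fun (LinearMap.mul' R A ∘ₗ (antipode R).lTensor A).lTensor A at hcoassoc
  simp only [map_sum, LinearMap.lTensor_tmul, LinearMap.comp_apply,
    LinearMap.mul'_apply] at hcoassoc
  simp only [← (𝓡₁ _).eq, Finset.sum_mul, Algebra.TensorProduct.tmul_mul_tmul, mul_one, hcoassoc]
  simp only [← tmul_sum, sum_mul_antipode_eq_smul, tmul_smul, smul_tmul', ← sum_tmul,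
    Coalgebra.sum_counit_right_smul]

theorem sum_antipode_tmul_one_mul_comul {a : A} {ι : Type*} (𝓡 : Repr R a ι) :
    ∑ i ∈ 𝓡.index, (antipode R (𝓡.left i) ⊗ₜ 1) * comul (R := R) (𝓡.right i) = 1 ⊗ₜ a := by
  classical
  let 𝓡₁ := fun i => ℛ R (𝓡.left i)
  let 𝓡₂ := fun i => ℛ R (𝓡.right i)
  have hcoassoc := sum_tmul_tmul_eq 𝓡 𝓡₁ 𝓡₂
  apply_fun (LinearMap.mul' R A ∘ₗ (antipode R).rTensor A).rTensor A ∘ₗ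
    (TensorProduct.assoc R A A A).symm.toLinearMap at hcoassoc
  simp only [map_sum, LinearMap.comp_apply, LinearEquiv.coe_coe, assoc_symm_tmul,
    LinearMap.rTensor_tmul, LinearMap.mul'_apply] at hcoassoc
  simp only [← (𝓡₂ _).eq, Finset.mul_sum, Algebra.TensorProduct.tmul_mul_tmul, one_mul,
    ← hcoassoc]
  simp only [← sum_tmul, sum_antipode_mul_eq_smul, smul_tmul, ← tmul_sum,
    Coalgebra.sum_counit_smul]

end HopfAlgebra

section

variable {R A : Type*} [CommSemiring R] [Semiring A] [Algebra R A]

theorem lid_rTensor_mul_tmul (g : Module.Dual R A) (x : A ⊗[R] A) (a b : A) :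
    TensorProduct.lid R A (g.rTensor A (x * (a ⊗ₜ b))) =
      TensorProduct.lid R A ((g ∘ₗ LinearMap.mulRight R a).rTensor A x) * b := by
  induction x with
  | zero => simp
  | tmul y z => simp
  | add y z hy hz => simp only [add_mul, map_add, hy, hz]

theorem lid_rTensor_tmul_mul (g : Module.Dual R A) (x : A ⊗[R] A) (a b : A) :
    TensorProduct.lid R A (g.rTensor A ((a ⊗ₜ b) * x)) =
      b * TensorProduct.lid R A ((g ∘ₗ LinearMap.mulLeft R a).rTensor A x) := by
  induction x with
  | zero => simp
  | tmul y z => simp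
  | add y z hy hz => simp only [mul_add, map_add, hy, hz]

end

namespace Coalgebra

variable {R A : Type*} [CommSemiring R] [AddCommMonoid A] [Module R A] [Coalgebra R A]

/-- `t ↼ g = ∑ g(t₁) t₂` in Sweedler notation. -/
def rightHit (t : A) (g : Module.Dual R A) : A :=
  _root_.TensorProduct.lid R A (g.rTensor A (comul t))

theorem counit_rightHit (t : A) (g : Module.Dual R A) :
    counit (R := R) (rightHit t g) = g t := by
  conv_rhs => rw [← sum_counit_right_smul (ℛ R t)]
  simp [rightHit, ← (ℛ R t).eq, mul_comm]

end Coalgebra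

namespace Bialgebra

open Coalgebra (rightHit counit_rightHit)

section Semiring

variable (R : Type*) {A : Type*} [CommSemiring R] [Semiring A] [Bialgebra R A]

def IsLeftIntegral (t : A) : Prop := ∀ a : A, a * t = counit (R := R) a • t

def IsRightIntegral (t : A) : Prop := ∀ a : A, t * a = counit (R := R) a • t

variable {R}

theorem IsLeftIntegral.comp_mulRight {x : A} (hx : IsLeftIntegral R x) (f : Module.Dual R A) :
    f ∘ₗ LinearMap.mulRight R x = f x • counit := by
  ext a
  simp [hx a, mul_comm]

end Semiring

section Ring

variable {R A : Type*} [CommRing R] [Ring A] [Bialgebra R A] {t : A}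

theorem isLeftIntegral_of_forall_counit_eq_zero
    (h : ∀ y : A, counit (R := R) y = 0 → y * t = 0) : IsLeftIntegral R t := fun a => by
  have := h (a - counit (R := R) a • 1) (by simp)
  rwa [sub_mul, smul_mul_assoc, one_mul, sub_eq_zero] at this

theorem isRightIntegral_of_forall_counit_eq_zero
    (h : ∀ y : A, counit (R := R) y = 0 → t * y = 0) : IsRightIntegral R t := fun a => by
  have := h (a - counit (R := R) a • 1) (by simp)
  rwa [mul_sub, mul_smul_comm, mul_one, sub_eq_zero] at this

end Ring

section Hopf

open _root_.TensorProduct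

variable {R A : Type*} [CommSemiring R] [Semiring A] [HopfAlgebra R A] {t : A}

theorem IsRightIntegral.comul_mul_tmul_one (ht : IsRightIntegral R t) (a : A) :
    comul t * (a ⊗ₜ 1) = comul (R := R) t * (1 ⊗ₜ antipode R a) := by
  calc comul t * (a ⊗ₜ 1)
      = ∑ i ∈ (ℛ R a).index, comul (R := R) (t * (ℛ R a).left i) *
          (1 ⊗ₜ antipode R ((ℛ R a).right i)) := by
        simp only [← HopfAlgebra.sum_comul_mul_one_tmul_antipode (ℛ R a), Finset.mul_sum,
          Bialgebra.comul_mul, mul_assoc]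
    _ = ∑ i ∈ (ℛ R a).index, counit (R := R) ((ℛ R a).left i) •
          (comul (R := R) t * (1 ⊗ₜ antipode R ((ℛ R a).right i))) := by
        simp only [ht _, map_smul, smul_mul_assoc]
    _ = comul (R := R) t * (1 ⊗ₜ antipode R a) := by
        simp only [← mul_smul_comm, ← tmul_smul, ← map_smul, ← Finset.mul_sum, ← tmul_sum,
          ← map_sum, Coalgebra.sum_counit_smul]

theorem IsLeftIntegral.one_tmul_mul_comul (ht : IsLeftIntegral R t) (a : A) :
    (1 ⊗ₜ a) * comul t = (antipode R a ⊗ₜ 1) * comul (R := R) t := by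
  calc (1 ⊗ₜ a) * comul t
      = ∑ i ∈ (ℛ R a).index, (antipode R ((ℛ R a).left i) ⊗ₜ 1) *
          comul (R := R) ((ℛ R a).right i * t) := by
        simp only [← HopfAlgebra.sum_antipode_tmul_one_mul_comul (ℛ R a), Finset.sum_mul,
          Bialgebra.comul_mul, mul_assoc]
    _ = ∑ i ∈ (ℛ R a).index, counit (R := R) ((ℛ R a).right i) •
          ((antipode R ((ℛ R a).left i) ⊗ₜ 1) * comul (R := R) t) := by
        simp only [ht _, map_smul, mul_smul_comm]
    _ = (antipode R a ⊗ₜ 1) * comul (R := R) t := by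
        simp only [← smul_mul_assoc, ← Finset.sum_mul, smul_tmul', ← sum_tmul, ← map_smul,
          ← map_sum, Coalgebra.sum_counit_right_smul]

theorem IsRightIntegral.rightHit_comp_mulRight (ht : IsRightIntegral R t) (g : Module.Dual R A)
    (a : A) : rightHit t (g ∘ₗ LinearMap.mulRight R a) = rightHit t g * antipode R a := by
  have := lid_rTensor_mul_tmul g (comul (R := R) t) a 1
  rw [ht.comul_mul_tmul_one, lid_rTensor_mul_tmul, mul_one] at this
  simpa [rightHit] using this.symm

theorem IsLeftIntegral.rightHit_comp_mulLeft_antipode (ht : IsLeftIntegral R t)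
    (g : Module.Dual R A) (a : A) :
    rightHit t (g ∘ₗ LinearMap.mulLeft R (antipode R a)) = a * rightHit t g := by
  have := lid_rTensor_tmul_mul g (comul (R := R) t) (antipode R a) 1
  rw [← ht.one_tmul_mul_comul, lid_rTensor_tmul_mul, one_mul] at this
  simpa [rightHit] using this.symm

theorem IsLeftIntegral.exists_rightHit_eq_one (ht : IsLeftIntegral R t) {g : Module.Dual R A}
    (hg : IsUnit (rightHit t g)) : ∃ f : Module.Dual R A, rightHit t f = 1 :=
  ⟨g ∘ₗ LinearMap.mulLeft R (antipode R ↑hg.unit⁻¹), by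
    rw [ht.rightHit_comp_mulLeft_antipode, hg.val_inv_mul]⟩

theorem IsLeftIntegral.injective_antipode (ht : IsLeftIntegral R t) {f : Module.Dual R A}
    (hf : rightHit t f = 1) : Function.Injective (antipode R (A := A)) := fun a b hab =>
  calc a = rightHit t (f ∘ₗ LinearMap.mulLeft R (antipode R a)) := by
        rw [ht.rightHit_comp_mulLeft_antipode, hf, mul_one]
    _ = b := by rw [hab, ht.rightHit_comp_mulLeft_antipode, hf, mul_one]

theorem injective_comp_mulRight_of_rightHit_eq_one (htl : IsLeftIntegral R t)
    (htr : IsRightIntegral R t) {f : Module.Dual R A} (hf : rightHit t f = 1) :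
    Function.Injective fun r : A => f ∘ₗ LinearMap.mulRight R r := by
  refine Function.Injective.of_comp (f := rightHit t) ?_
  convert htl.injective_antipode hf using 1
  ext r
  simp [htr.rightHit_comp_mulRight, hf]

end Hopf

section Field

variable {k A : Type*} [Field k] [Ring A] [HopfAlgebra k A] {t x : A}

theorem IsLeftIntegral.eq_smul_of_injective (hx : IsLeftIntegral k x)
    (ht : IsLeftIntegral k t) (ht0 : t ≠ 0) {f : Module.Dual k A}
    (hf : Function.Injective fun r : A => f ∘ₗ LinearMap.mulRight k r) :
    x = (f x / f t) • t := by
  have hft : f t ≠ 0 := by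
    intro h
    apply ht0 (hf _)
    simp [ht.comp_mulRight, h]
  apply hf
  ext a
  simp only [LinearMap.comp_apply, LinearMap.mulRight_apply, hx a, ht a, mul_smul_comm, map_smul,
    smul_eq_mul]
  field_simp

theorem IsLeftIntegral.exists_eq_smul (hx : IsLeftIntegral k x) (htl : IsLeftIntegral k t)
    (htr : IsRightIntegral k t) (ht0 : t ≠ 0)
    (hnil : ∀ y : A, counit (R := k) y = 0 → IsNilpotent y) : ∃ c : k, x = c • t := by
  obtain ⟨g, hg⟩ := Module.Projective.exists_dual_eq_one k ht0
  have hunit : IsUnit (rightHit t g) := by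
    simpa using (hnil (rightHit t g - 1) (by simp [counit_rightHit, hg])).isUnit_add_one
  obtain ⟨f, hf⟩ := htl.exists_rightHit_eq_one hunit
  exact ⟨_, hx.eq_smul_of_injective htl ht0
    (injective_comp_mulRight_of_rightHit_eq_one htl htr hf)⟩

end Field

end Bialgebra

namespace Submodule

variable {R A : Type*} [CommSemiring R] [Semiring A] [Algebra R A] {I : Submodule R A}

theorem isNilpotent_of_mem (hI : IsNilpotent I) {x : A} (hx : x ∈ I) : IsNilpotent x := by
  obtain ⟨n, hn⟩ := hI
  exact ⟨n, by simpa [hn] using pow_mem_pow I hx n⟩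

theorem exists_ne_zero_forall_mul_eq_zero [Nontrivial A] (hI : IsNilpotent I) :
    ∃ t ≠ (0 : A), ∀ y ∈ I, y * t = 0 ∧ t * y = 0 := by
  obtain ⟨n, hn⟩ := Nat.exists_eq_add_one.2 (pos_nilpotencyClass_iff.2 hI)
  have hne : I ^ n ≠ ⊥ := by simpa [hn] using pow_pred_nilpotencyClass hI
  have hzero : I ^ (n + 1) = ⊥ := hn ▸ pow_nilpotencyClass hI
  obtain ⟨t, ht, ht0⟩ := exists_mem_ne_zero_of_ne_bot hne
  refine ⟨t, ht0, fun y hy => ⟨?_, ?_⟩⟩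
  · simpa [← pow_succ', hzero] using mul_mem_mul hy ht
  · simpa [← pow_succ, hzero] using mul_mem_mul ht hy

theorem exists_mul_ne_zero_forall_mul_eq_zero (hI : IsNilpotent I) {r : A} (hr : r ≠ 0) :
    ∃ u : A, u * r ≠ 0 ∧ ∀ y ∈ I, y * (u * r) = 0 := by
  classical
  have hP : ∃ n, ∀ u ∈ I ^ n, u * r = 0 := by
    obtain ⟨n, hn⟩ := hI
    exact ⟨n, fun u hu => by simp_all [Submodule.zero_eq_bot]⟩
  obtain ⟨n, hn⟩ : ∃ n, Nat.find hP = n + 1 := by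
    refine Nat.exists_eq_add_one.2 (Nat.pos_of_ne_zero fun h => hr ?_)
    have h0 : ∀ u ∈ I ^ 0, u * r = 0 := h ▸ Nat.find_spec hP
    simpa using h0 1 (by simp [one_eq_span])
  obtain ⟨u, hu, hur⟩ := not_forall₂.1 (Nat.find_min hP (by omega : n < Nat.find hP))
  refine ⟨u, hur, fun y hy => ?_⟩
  rw [← mul_assoc]
  exact (hn ▸ Nat.find_spec hP) _ (pow_succ' I n ▸ mul_mem_mul hy hu)

theorem exists_mul_eq_smul (hI : span R {1} ⊔ I = ⊤) {t : A} (ht : ∀ y ∈ I, y * t = 0)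
    (z : A) : ∃ c : R, z * t = c • t := by
  obtain ⟨_, ha, w, hw, rfl⟩ := mem_sup.1 (hI ▸ mem_top : z ∈ span R {1} ⊔ I)
  obtain ⟨c, rfl⟩ := mem_span_singleton.1 ha
  exact ⟨c, by rw [add_mul, ht w hw, add_zero, smul_one_mul]⟩

end Submodule

section Frobenius

variable {k A : Type*} [Field k] [Ring A] [Algebra k A] [FiniteDimensional k A]

theorem bijective_comp_mulRight_of_forall_exists_ne_zero (ω : Module.Dual k A)
    (hω : ∀ r : A, r ≠ 0 → ∃ u : A, ω (u * r) ≠ 0) :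
    Function.Bijective fun r : A => ω ∘ₗ LinearMap.mulRight k r := by
  let Φ : A →ₗ[k] Module.Dual k A := ((LinearMap.mul k A).compr₂ ω).flip
  have hΦ : ⇑Φ = fun r : A => ω ∘ₗ LinearMap.mulRight k r := by
    funext r
    ext u
    rfl
  have hinj : Function.Injective Φ := by
    refine (injective_iff_map_eq_zero Φ).2 fun r hr => ?_
    by_contra hr0
    obtain ⟨u, hu⟩ := hω r hr0
    exact hu (LinearMap.congr_fun hr u)
  rw [← hΦ]
  exact ⟨hinj, (LinearMap.injective_iff_surjective_of_finrank_eq_finrank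
    Subspace.dual_finrank_eq.symm).1 hinj⟩

theorem exists_dual_bijective_comp_mulRight {I : Submodule k A} (hI : IsNilpotent I) {t : A}
    (ht : t ≠ 0) (hsoc : ∀ x : A, (∀ y ∈ I, y * x = 0) → ∃ c : k, x = c • t) :
    ∃ ω : Module.Dual k A, Function.Bijective fun r : A => ω ∘ₗ LinearMap.mulRight k r := by
  obtain ⟨ω, hωt⟩ := Module.Projective.exists_dual_eq_one k ht
  refine ⟨ω, bijective_comp_mulRight_of_forall_exists_ne_zero ω fun r hr => ?_⟩
  obtain ⟨u, hur, hsocle⟩ := Submodule.exists_mul_ne_zero_forall_mul_eq_zero hI hr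
  obtain ⟨c, hc⟩ := hsoc _ hsocle
  refine ⟨u, fun h => hur ?_⟩
  rw [hc, map_smul, hωt, smul_eq_mul, mul_one] at h
  rw [hc, h, zero_smul]

end Frobenius

namespace GradedAlgebra

section Semiring

variable {R A : Type*} [CommSemiring R] [Semiring A] [Algebra R A] (𝒜 : ℕ → Submodule R A)

theorem iSup_add_mul_iSup_add_le [SetLike.GradedMul 𝒜] (m n : ℕ) :
    (⨆ i, 𝒜 (i + m)) * (⨆ j, 𝒜 (j + n)) ≤ ⨆ l, 𝒜 (l + (m + n)) := by
  rw [Submodule.iSup_mul]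
  refine iSup_le fun i => ?_
  rw [Submodule.mul_iSup]
  refine iSup_le fun j => Submodule.mul_le.2 fun x hx y hy => ?_
  refine Submodule.mem_iSup_of_mem (i + j) ?_
  have hxy := SetLike.mul_mem_graded hx hy
  rwa [show i + m + (j + n) = i + j + (m + n) by omega] at hxy

theorem iSup_add_one_pow_le [SetLike.GradedMonoid 𝒜] (n : ℕ) :
    (⨆ i, 𝒜 (i + 1)) ^ n ≤ ⨆ i, 𝒜 (i + n) := by
  induction n with
  | zero =>
    rw [pow_zero, Submodule.one_eq_span, Submodule.span_le, Set.singleton_subset_iff]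
    exact Submodule.mem_iSup_of_mem 0 (SetLike.one_mem_graded 𝒜)
  | succ n ih =>
    rw [pow_succ]
    exact (mul_le_mul' ih le_rfl).trans (iSup_add_mul_iSup_add_le 𝒜 n 1)

end Semiring

variable {k A : Type*} [Field k] [Ring A] [Algebra k A] (𝒜 : ℕ → Submodule k A) [GradedAlgebra 𝒜]

theorem exists_forall_lt_eq_bot [FiniteDimensional k A] : ∃ N, ∀ i, N < i → 𝒜 i = ⊥ := by
  obtain ⟨N, hN⟩ := (Submodule.finite_ne_bot_of_iSupIndep
    (DirectSum.Decomposition.isInternal 𝒜).submodule_iSupIndep).bddAbove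
  exact ⟨N, fun i hi => by_contra fun h => hi.not_ge (hN h)⟩

theorem isNilpotent_iSup_add_one [FiniteDimensional k A] : IsNilpotent (⨆ i, 𝒜 (i + 1)) := by
  obtain ⟨N, hN⟩ := exists_forall_lt_eq_bot 𝒜
  refine ⟨N + 1, le_bot_iff.1 ((iSup_add_one_pow_le 𝒜 _).trans (iSup_le fun i => ?_))⟩
  exact (hN _ (by omega)).le

theorem span_one_sup_iSup_add_one (hconn : 𝒜 0 = Submodule.span k {1}) :
    Submodule.span k {1} ⊔ ⨆ i, 𝒜 (i + 1) = ⊤ := by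
  rw [← hconn, sup_iSup_nat_succ, (DirectSum.Decomposition.isInternal 𝒜).submodule_iSup_eq_top]

theorem map_eq_zero_iff_mem_iSup_add_one [FiniteDimensional k A]
    (hconn : 𝒜 0 = Submodule.span k {1}) {F : Type*} [FunLike F A k] [RingHomClass F A k] (φ : F) (y : A) :
    φ y = 0 ↔ y ∈ ⨆ i, 𝒜 (i + 1) := by
  have hkill : ∀ w ∈ ⨆ i, 𝒜 (i + 1), φ w = 0 := fun w hw =>
    ((Submodule.isNilpotent_of_mem (isNilpotent_iSup_add_one 𝒜) hw).map φ).eq_zero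
  refine ⟨fun hy => ?_, hkill y⟩
  obtain ⟨_, ha, w, hw, rfl⟩ :=
    Submodule.mem_sup.1 ((span_one_sup_iSup_add_one 𝒜 hconn).symm ▸ Submodule.mem_top (x := y))
  obtain ⟨c, rfl⟩ := Submodule.mem_span_singleton.1 ha
  have hc : φ (algebraMap k A c) = 0 := by
    rwa [map_add, hkill w hw, add_zero, Algebra.smul_def, mul_one] at hy
  rw [(map_eq_zero_iff ((φ : A →+* k).comp (algebraMap k A)) (RingHom.injective _)).1 hc,
    zero_smul, zero_add]
  exact hw

end GradedAlgebra

/-- Sweedler: Let `k` be a field and `A` a finite-dimensional graded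
connected Hopf algebra over `k` (nonnegatively graded with `A_0 = k`).  Then `A`
satisfies Poincaré duality: the dual `Hom_k(A, k)` is a free `A`-module of rank one for
the action by right multiplication, i.e. there is a functional `ω` such that
`r ↦ ω(— * r)` is a bijection `A → Hom_k(A,k)`. -/
theorem hopf_algebra_poincare_duality
    (k : Type u) [Field k] (A : Type u) [Ring A] [Algebra k A] [HopfAlgebra k A]
    (𝒜 : ℕ → Submodule k A) [GradedAlgebra 𝒜]
    (hconn : 𝒜 0 = Submodule.span k {(1 : A)})
    [FiniteDimensional k A] :
    ∃ ω : Module.Dual k A,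
      Function.Bijective (fun r : A => ω.comp (LinearMap.mulRight k r)) := by
  obtain hA | hA := subsingleton_or_nontrivial A
  · exact ⟨0, fun _ _ _ => Subsingleton.elim _ _, fun _ => ⟨0, Subsingleton.elim _ _⟩⟩
  -- The Hopf structure carries its own `k`-algebra structure, which need not be the one graded
  -- by `𝒜`; only ring-theoretic facts are passed between the two.
  set K := ⨆ i, 𝒜 (i + 1)
  have hK : IsNilpotent K := GradedAlgebra.isNilpotent_iSup_add_one 𝒜
  have hker : ∀ y, Bialgebra.counitAlgHom k A y = 0 ↔ y ∈ K :=
    GradedAlgebra.map_eq_zero_iff_mem_iSup_add_one 𝒜 hconn _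
  obtain ⟨t, ht0, ht⟩ := Submodule.exists_ne_zero_forall_mul_eq_zero hK
  have htl : Bialgebra.IsLeftIntegral k t := Bialgebra.isLeftIntegral_of_forall_counit_eq_zero
    fun y hy => (ht y ((hker y).1 hy)).1
  have htr : Bialgebra.IsRightIntegral k t := Bialgebra.isRightIntegral_of_forall_counit_eq_zero
    fun y hy => (ht y ((hker y).1 hy)).2
  refine exists_dual_bijective_comp_mulRight hK ht0 fun x hx => ?_
  have hxl : Bialgebra.IsLeftIntegral k x :=
    Bialgebra.isLeftIntegral_of_forall_counit_eq_zero fun y hy => hx y ((hker y).1 hy)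
  obtain ⟨c, hc⟩ := hxl.exists_eq_smul htl htr ht0 fun y hy =>
    Submodule.isNilpotent_of_mem hK ((hker y).1 hy)
  rw [hc, @Algebra.smul_def k A _ _ Bialgebra.toAlgebra]
  exact Submodule.exists_mul_eq_smul (GradedAlgebra.span_one_sup_iSup_add_one 𝒜 hconn)
    (fun y hy => (ht y hy).1) _
end
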